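/- arXiv:2103.00942 — 9 statements merged into one kernel-verified Lean document; each statement's English description precedes it below -/
import Mathlib

section
/- Let F = (A, f) be a fuzzy finite automaton over an alphabet X and let F^nd be its associated nondeterministic finite automaton. Then D_1(F) = D_1(F^nd), D_2(F) = D_2(F^nd) and D_3(F) = D_3(F^nd); consequently, for each i = 1, 2, 3, F is Di-directable if and only if F^nd is Di-directable. -/
open scoped Classical

/-- Extended fuzzy transition function `f*` of a fuzzy finite automaton. -/
noncomputable def fstar {A X : Type*} [Fintype A] [Nonempty A]
    (f : A → X → A → unitInterval) : A → List X → A → unitInterval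
  | a, [], b => if b = a then 1 else 0
  | a, x :: v, b => Finset.univ.sup' Finset.univ_nonempty fun c => min (f a x c) (fstar f c v b)

/-- `F(a, w)`: the set of states reachable from `a` by `w` with positive degree. -/
def freach {A X : Type*} [Fintype A] [Nonempty A]
    (f : A → X → A → unitInterval) (a : A) (w : List X) : Set A :=
  {b | 0 < fstar f a w b}

/-- Extended transition function of a nondeterministic finite automaton. -/
def astar {A X : Type*} (α : A → X → Set A) : Set A → List X → Set A
  | H, [] => H
  | H, x :: u => astar α (⋃ b ∈ H, α b x) u

/-- D1-directing words of a fuzzy finite automaton. -/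
def D1set {A X : Type*} [Fintype A] [Nonempty A] (f : A → X → A → unitInterval) :
    Set (List X) := {w | ∃ c, ∀ a, freach f a w = {c}}

/-- D2-directing words of a fuzzy finite automaton. -/
def D2set {A X : Type*} [Fintype A] [Nonempty A] (f : A → X → A → unitInterval) :
    Set (List X) := {w | ∀ a b, freach f a w = freach f b w}

/-- D3-directing words of a fuzzy finite automaton. -/
def D3set {A X : Type*} [Fintype A] [Nonempty A] (f : A → X → A → unitInterval) :
    Set (List X) := {w | ∃ c, ∀ a, c ∈ freach f a w}

/-- D1-, D2- and D3-directing words of an NFA. -/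
def nD1set {A X : Type*} (α : A → X → Set A) : Set (List X) :=
  {w | ∃ c, ∀ a, astar α {a} w = {c}}

def nD2set {A X : Type*} (α : A → X → Set A) : Set (List X) :=
  {w | ∀ a b, astar α {a} w = astar α {b} w}

def nD3set {A X : Type*} (α : A → X → Set A) : Set (List X) :=
  {w | ∃ c, ∀ a, c ∈ astar α {a} w}

/-!
A maximum of minima is positive iff some term has all its arguments positive, so the supports
`F(a, w)` of `f*` obey the same recursion in `w` as the reachable sets `α*(a, w)` of `F^nd`.
Hence the two automata have the same reachable sets and the same directing words of each kind.
-/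

/-- The NFA `F^nd`. -/
def assocNFA {A X : Type*} (f : A → X → A → unitInterval) : A → X → Set A :=
  fun a x => {b | 0 < f a x b}

section NFA

variable {A X : Type*} (α : A → X → Set A)

lemma astar_eq_biUnion (H : Set A) (w : List X) :
    astar α H w = ⋃ a ∈ H, astar α {a} w := by
  induction w generalizing H with
  | nil => simp [astar]
  | cons x v ih =>
    calc astar α (⋃ b ∈ H, α b x) v
        = ⋃ c ∈ ⋃ b ∈ H, α b x, astar α {c} v := ih _
      _ = ⋃ b ∈ H, ⋃ c ∈ α b x, astar α {c} v := by simp only [Set.biUnion_iUnion]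
      _ = ⋃ b ∈ H, astar α {b} (x :: v) := by
        simp only [astar, Set.biUnion_singleton, ← ih]

lemma astar_singleton_cons (a : A) (x : X) (w : List X) :
    astar α {a} (x :: w) = ⋃ b ∈ α a x, astar α {b} w := by
  rw [astar, Set.biUnion_singleton, astar_eq_biUnion]

end NFA

section FFA

variable {A X : Type*} [Fintype A] [Nonempty A] (f : A → X → A → unitInterval)

lemma fstar_nil_pos_iff (a b : A) : 0 < fstar f a [] b ↔ b = a := by
  by_cases h : b = a <;> simp [fstar, h]

lemma fstar_cons_pos_iff (a b : A) (x : X) (w : List X) :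
    0 < fstar f a (x :: w) b ↔ ∃ c, 0 < f a x c ∧ 0 < fstar f c w b := by
  simp [fstar, Finset.lt_sup'_iff]

theorem freach_eq_astar_assocNFA (a : A) (w : List X) :
    freach f a w = astar (assocNFA f) {a} w := by
  induction w generalizing a with
  | nil => ext b; exact fstar_nil_pos_iff f a b
  | cons x v ih =>
    ext b
    simp only [astar_singleton_cons, Set.mem_iUnion, exists_prop, ← ih, freach, assocNFA,
      Set.mem_ofPred_eq, fstar_cons_pos_iff]

theorem D1set_eq_nD1set_assocNFA : D1set f = nD1set (assocNFA f) := by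
  simp only [D1set, nD1set, freach_eq_astar_assocNFA]

theorem D2set_eq_nD2set_assocNFA : D2set f = nD2set (assocNFA f) := by
  simp only [D2set, nD2set, freach_eq_astar_assocNFA]

theorem D3set_eq_nD3set_assocNFA : D3set f = nD3set (assocNFA f) := by
  simp only [D3set, nD3set, freach_eq_astar_assocNFA]

end FFA

theorem stmt1_general {A X : Type*} [Fintype A] [Nonempty A]
    (f : A → X → A → unitInterval) :
    D1set f = nD1set (fun a x => {b | 0 < f a x b}) ∧
    D2set f = nD2set (fun a x => {b | 0 < f a x b}) ∧
    D3set f = nD3set (fun a x => {b | 0 < f a x b}) ∧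
    ((D1set f).Nonempty ↔ (nD1set (fun a x => {b | 0 < f a x b})).Nonempty) ∧
    ((D2set f).Nonempty ↔ (nD2set (fun a x => {b | 0 < f a x b})).Nonempty) ∧
    ((D3set f).Nonempty ↔ (nD3set (fun a x => {b | 0 < f a x b})).Nonempty) := by
  have h1 := D1set_eq_nD1set_assocNFA f
  have h2 := D2set_eq_nD2set_assocNFA f
  have h3 := D3set_eq_nD3set_assocNFA f
  exact ⟨h1, h2, h3, by rw [h1]; rfl, by rw [h2]; rfl, by rw [h3]; rfl⟩

/-- For an FFA `F` and its associated NFA `F^nd`, `D_i(F) = D_i(F^nd)` for `i = 1, 2, 3`;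
consequently `F` is Di-directable iff `F^nd` is Di-directable. -/
theorem stmt1 {A X : Type*} [Fintype X] [Nonempty X] [Fintype A] [Nonempty A]
    (f : A → X → A → unitInterval) :
    D1set f = nD1set (fun a x => {b | 0 < f a x b}) ∧
    D2set f = nD2set (fun a x => {b | 0 < f a x b}) ∧
    D3set f = nD3set (fun a x => {b | 0 < f a x b}) ∧
    ((D1set f).Nonempty ↔ (nD1set (fun a x => {b | 0 < f a x b})).Nonempty) ∧
    ((D2set f).Nonempty ↔ (nD2set (fun a x => {b | 0 < f a x b})).Nonempty) ∧
    ((D3set f).Nonempty ↔ (nD3set (fun a x => {b | 0 < f a x b})).Nonempty) :=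
  stmt1_general f
end

section
/- For any fuzzy finite automaton F = (A, f) over an alphabet X, D_2(F)X* = D_2(F). If moreover F is complete, then X*D_1(F) = D_1(F), X*D_2(F)X* = D_2(F) and X*D_3(F)X* = D_3(F). -/
/-!
Reachable sets compose: `F(a, uv) = ⋃_{c ∈ F(a, u)} F(c, v)`. Appending a word on the right
therefore preserves `F(a, w) = F(b, w)`. For a complete automaton every `F(a, u)` is nonempty, so
this union collapses to `F(·, w)` when `w` is D2-directing (which covers D1 as well), and a common
state of all `F(a, w)` propagates both through a prefix and, via any state of `F(c, v)`, through
a suffix.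
-/

open scoped Classical

/-- Concatenation of languages: `KL = {uv : u ∈ K, v ∈ L}`. -/
def conc {X : Type*} (K L : Set (List X)) : Set (List X) :=
  {w | ∃ u ∈ K, ∃ v ∈ L, w = u ++ v}

section Conc
variable {X : Type*} {K : Set (List X)}

theorem conc_univ_eq_self (hK : ∀ u ∈ K, ∀ v, u ++ v ∈ K) : conc K Set.univ = K := by
  ext w
  constructor
  · rintro ⟨u, hu, v, -, rfl⟩
    exact hK u hu v
  · exact fun hw => ⟨w, hw, [], trivial, (List.append_nil w).symm⟩

theorem univ_conc_eq_self (hK : ∀ u, ∀ v ∈ K, u ++ v ∈ K) : conc Set.univ K = K := by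
  ext w
  constructor
  · rintro ⟨u, -, v, hv, rfl⟩
    exact hK u v hv
  · exact fun hw => ⟨[], trivial, w, hw, rfl⟩

end Conc

section Reach
variable {A X : Type*} [Fintype A] [Nonempty A] (f : A → X → A → unitInterval)

theorem freach_nil (a : A) : freach f a [] = {a} := by
  ext b
  by_cases h : b = a <;> simp [freach, fstar, h]

theorem freach_cons (a : A) (x : X) (w : List X) :
    freach f a (x :: w) = ⋃ c ∈ {c | 0 < f a x c}, freach f c w := by
  ext b
  simp [freach, fstar, Finset.lt_sup'_iff]

theorem freach_append (a : A) (u v : List X) :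
    freach f a (u ++ v) = ⋃ c ∈ freach f a u, freach f c v := by
  induction u generalizing a with
  | nil => simp [freach_nil]
  | cons x u ih => simp only [List.cons_append, freach_cons, ih, Set.biUnion_iUnion]

theorem freach_subset_freach_append {a c : A} {u : List X} (hc : c ∈ freach f a u)
    (v : List X) : freach f c v ⊆ freach f a (u ++ v) := by
  rw [freach_append]
  exact Set.subset_biUnion_of_mem (u := fun c => freach f c v) hc

variable {f}

theorem freach_nonempty (hf : ∀ a x, ∃ b, 0 < f a x b) (a : A) (w : List X) :
    (freach f a w).Nonempty := by
  induction w generalizing a with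
  | nil => exact ⟨a, by simp [freach_nil]⟩
  | cons x w ih =>
    obtain ⟨b, hb⟩ := hf a x
    rw [freach_cons]
    exact (ih b).mono (Set.subset_biUnion_of_mem (u := fun c => freach f c w) hb)

theorem freach_append_eq_of_mem_D2set (hf : ∀ a x, ∃ b, 0 < f a x b) {w : List X}
    (hw : w ∈ D2set f) (a b : A) (u : List X) : freach f a (u ++ w) = freach f b w := by
  rw [freach_append]
  simp only [hw _ b]
  exact Set.biUnion_const (freach_nonempty hf a u) _

theorem append_mem_D2set {w : List X} (hw : w ∈ D2set f) (v : List X) :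
    w ++ v ∈ D2set f := by
  intro a b
  rw [freach_append, freach_append, hw a b]

theorem append_mem_D2set_left (hf : ∀ a x, ∃ b, 0 < f a x b) (u : List X) {w : List X}
    (hw : w ∈ D2set f) : u ++ w ∈ D2set f := by
  intro a b
  rw [freach_append_eq_of_mem_D2set hf hw a a, freach_append_eq_of_mem_D2set hf hw b a]

theorem append_mem_D1set_left (hf : ∀ a x, ∃ b, 0 < f a x b) (u : List X) {w : List X}
    (hw : w ∈ D1set f) : u ++ w ∈ D1set f := by
  obtain ⟨c, hc⟩ := hw
  have hw₂ : w ∈ D2set f := fun a b => by rw [hc a, hc b]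
  exact ⟨c, fun a => by rw [freach_append_eq_of_mem_D2set hf hw₂ a a, hc a]⟩

theorem append_mem_D3set (hf : ∀ a x, ∃ b, 0 < f a x b) {w : List X}
    (hw : w ∈ D3set f) (v : List X) : w ++ v ∈ D3set f := by
  obtain ⟨c, hc⟩ := hw
  obtain ⟨d, hd⟩ := freach_nonempty hf c v
  exact ⟨d, fun a => freach_subset_freach_append f (hc a) v hd⟩

theorem append_mem_D3set_left (hf : ∀ a x, ∃ b, 0 < f a x b) (u : List X) {w : List X}
    (hw : w ∈ D3set f) : u ++ w ∈ D3set f := by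
  obtain ⟨c, hc⟩ := hw
  refine ⟨c, fun a => ?_⟩
  obtain ⟨e, he⟩ := freach_nonempty hf a u
  exact freach_subset_freach_append f he w (hc e)

end Reach

theorem stmt3_general {A X : Type*} [Fintype A] [Nonempty A]
    (f : A → X → A → unitInterval) :
    conc (D2set f) Set.univ = D2set f ∧
    ((∀ (a : A) (x : X), ∃ b, 0 < f a x b) →
      conc Set.univ (D1set f) = D1set f ∧
      conc Set.univ (conc (D2set f) Set.univ) = D2set f ∧
      conc Set.univ (conc (D3set f) Set.univ) = D3set f) := by
  have hD2 : conc (D2set f) Set.univ = D2set f :=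
    conc_univ_eq_self fun _ => append_mem_D2set
  refine ⟨hD2, fun hf => ⟨?_, ?_, ?_⟩⟩
  · exact univ_conc_eq_self fun u _ hw => append_mem_D1set_left hf u hw
  · rw [hD2]
    exact univ_conc_eq_self fun u _ hw => append_mem_D2set_left hf u hw
  · rw [conc_univ_eq_self fun _ hw v => append_mem_D3set hf hw v]
    exact univ_conc_eq_self fun u _ hw => append_mem_D3set_left hf u hw

/-- `D_2(F)X* = D_2(F)`; if `F` is complete then moreover `X*D_1(F) = D_1(F)`,
`X*D_2(F)X* = D_2(F)` and `X*D_3(F)X* = D_3(F)`. -/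
theorem stmt3 {A X : Type*} [Fintype X] [Nonempty X] [Fintype A] [Nonempty A]
    (f : A → X → A → unitInterval) :
    conc (D2set f) Set.univ = D2set f ∧
    ((∀ (a : A) (x : X), ∃ b, 0 < f a x b) →
      conc Set.univ (D1set f) = D1set f ∧
      conc Set.univ (conc (D2set f) Set.univ) = D2set f ∧
      conc Set.univ (conc (D3set f) Set.univ) = D3set f) :=
  stmt3_general f
end

section
/- A complete fuzzy finite automaton F = (A, f) over an alphabet X is D3-directable if and only if every pair of its states has a D3-merging word, i.e., for all a, b ∈ A there exists w ∈ X* with F(a, w) ∩ F(b, w) ≠ ∅. -/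
open scoped Classical

/-!
Merging the states of a finite set one at a time: if a word `w` sends every state of `S` to `c`
and `a` to some `a'` (completeness), a word merging `c` and `a'` extends `w` to a word sending
`insert a S` to a common state. Since `F(a, wu) ⊇ F(F(a, w), u)`, reachable states compose.
-/

namespace FuzzyAutomaton

variable {A X : Type*} [Fintype A] [Nonempty A] (f : A → X → A → unitInterval)

theorem min_fstar_le_fstar_append (w u : List X) (a c e : A) :
    min (fstar f a w c) (fstar f c u e) ≤ fstar f a (w ++ u) e := by
  induction w generalizing a with
  | nil =>
    by_cases h : c = a
    · subst h
      simp [fstar]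
    · simp [fstar, h]
  | cons x v ih =>
    obtain ⟨d, -, hd⟩ := Finset.exists_mem_eq_sup' Finset.univ_nonempty
      fun d => min (f a x d) (fstar f d v c)
    rw [fstar, hd]
    calc min (min (f a x d) (fstar f d v c)) (fstar f c u e)
        = min (f a x d) (min (fstar f d v c) (fstar f c u e)) := min_assoc _ _ _
      _ ≤ min (f a x d) (fstar f d (v ++ u) e) := min_le_min le_rfl (ih d)
      _ ≤ fstar f a ((x :: v) ++ u) e :=
        Finset.le_sup' (fun d => min (f a x d) (fstar f d (v ++ u) e)) (Finset.mem_univ d)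

theorem mem_freach_nil_self (a : A) : a ∈ freach f a [] := by
  simp [freach, fstar]

theorem mem_freach_append {w u : List X} {a c e : A}
    (hc : c ∈ freach f a w) (he : e ∈ freach f c u) : e ∈ freach f a (w ++ u) :=
  (lt_min hc he).trans_le (min_fstar_le_fstar_append f w u a c e)

theorem freach_nonempty (hcomp : ∀ (a : A) (x : X), ∃ b, 0 < f a x b) (a : A) (w : List X) :
    (freach f a w).Nonempty := by
  induction w generalizing a with
  | nil => exact ⟨a, mem_freach_nil_self f a⟩
  | cons x v ih =>
    obtain ⟨c, hc⟩ := hcomp a x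
    obtain ⟨b, hb⟩ := ih c
    exact ⟨b, (lt_min hc hb).trans_le
      (Finset.le_sup' (fun c => min (f a x c) (fstar f c v b)) (Finset.mem_univ c))⟩

theorem exists_common_mem_freach_of_merging (hcomp : ∀ (a : A) (x : X), ∃ b, 0 < f a x b)
    (hmerge : ∀ a b : A, ∃ w : List X, (freach f a w ∩ freach f b w).Nonempty)
    (S : Finset A) : ∃ w : List X, ∃ c, ∀ a ∈ S, c ∈ freach f a w := by
  induction S using Finset.induction_on with
  | empty => exact ⟨[], Classical.arbitrary A, by simp⟩
  | insert a S _ ih =>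
    obtain ⟨w, c, hc⟩ := ih
    obtain ⟨a', ha'⟩ := freach_nonempty f hcomp a w
    obtain ⟨u, d, hcd, ha'd⟩ := hmerge c a'
    refine ⟨w ++ u, d, (Finset.forall_mem_insert _ _ _).mpr ⟨?_, ?_⟩⟩
    · exact mem_freach_append f ha' ha'd
    · exact fun b hb => mem_freach_append f (hc b hb) hcd

end FuzzyAutomaton

theorem stmt5_general {A X : Type*} [Fintype A] [Nonempty A]
    (f : A → X → A → unitInterval)
    (hcomp : ∀ (a : A) (x : X), ∃ b, 0 < f a x b) :
    (∃ w : List X, ∃ c, ∀ a, c ∈ freach f a w) ↔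
      ∀ a b : A, ∃ w : List X, (freach f a w ∩ freach f b w).Nonempty := by
  refine ⟨fun ⟨w, c, hc⟩ a b => ⟨w, c, hc a, hc b⟩, fun hmerge => ?_⟩
  obtain ⟨w, c, hc⟩ := FuzzyAutomaton.exists_common_mem_freach_of_merging f hcomp hmerge
    Finset.univ
  exact ⟨w, c, fun a => hc a (Finset.mem_univ a)⟩

/-- A complete FFA is D3-directable iff every pair of its states has a D3-merging word. -/
theorem stmt5 {A X : Type*} [Fintype X] [Nonempty X] [Fintype A] [Nonempty A]
    (f : A → X → A → unitInterval)
    (hcomp : ∀ (a : A) (x : X), ∃ b, 0 < f a x b) :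
    (∃ w : List X, ∃ c, ∀ a, c ∈ freach f a w) ↔
      ∀ a b : A, ∃ w : List X, (freach f a w ∩ freach f b w).Nonempty :=
  stmt5_general f hcomp
end

section
/- If F = (A, f) is a crisp fuzzy finite automaton over an alphabet X, then DD_1(F) = D_1(F), DD_2(F) = D_2(F) and DD_3(F) = D_3(F). -/
open scoped Classical

/-- A word is DD1-directing: some state `c` is reached from every state with the same
positive degree `r`, and no other state is reachable. -/
def IsDD1 {A X : Type*} [Fintype A] [Nonempty A] (f : A → X → A → unitInterval)
    (w : List X) : Prop :=
  ∃ (c : A) (r : unitInterval), 0 < r ∧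
    ∀ a, fstar f a w c = r ∧ ∀ b, b ≠ c → fstar f a w b = 0

/-- A word is DD2-directing: the fuzzy set of reached states is independent of the start. -/
def IsDD2 {A X : Type*} [Fintype A] [Nonempty A] (f : A → X → A → unitInterval)
    (w : List X) : Prop :=
  ∀ a b c, fstar f a w c = fstar f b w c

/-- A word is DD3-directing: some state `c` has positive and maximal reachability degree
from every state. -/
def IsDD3 {A X : Type*} [Fintype A] [Nonempty A] (f : A → X → A → unitInterval)
    (w : List X) : Prop :=
  ∃ c, ∀ a, 0 < fstar f a w c ∧ ∀ b, fstar f a w b ≤ fstar f a w c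

def DD1set {A X : Type*} [Fintype A] [Nonempty A] (f : A → X → A → unitInterval) :
    Set (List X) := {w | IsDD1 f w}

def DD2set {A X : Type*} [Fintype A] [Nonempty A] (f : A → X → A → unitInterval) :
    Set (List X) := {w | IsDD2 f w}

def DD3set {A X : Type*} [Fintype A] [Nonempty A] (f : A → X → A → unitInterval) :
    Set (List X) := {w | IsDD3 f w}

/-! Since `max` and `min` of two values is one of them, a crisp automaton has
`f*(a, w, b) ∈ {0, 1}`, i.e. `f*(a, w, ·)` is the characteristic function of `F(a, w)`.
Each DD-condition then says exactly what the corresponding D-condition says. -/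

def IsCrisp {A X : Type*} (f : A → X → A → unitInterval) : Prop :=
  ∀ a x b, f a x b = 0 ∨ f a x b = 1

section FuzzyAutomaton

variable {A X : Type*} [Fintype A] [Nonempty A] {f : A → X → A → unitInterval}

theorem fstar_mem_of_forall_mem (S : Set unitInterval) (h0 : 0 ∈ S) (h1 : 1 ∈ S)
    (hf : ∀ a x b, f a x b ∈ S) (w : List X) (a b : A) : fstar f a w b ∈ S := by
  induction w generalizing a with
  | nil =>
    simp only [fstar]
    split_ifs
    exacts [h1, h0]
  | cons x v ih =>
    refine Finset.sup'_mem S (fun p hp q hq => ?_) _ _ _ fun c _ => ?_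
    · rcases max_choice p q with h | h <;> rw [h] <;> assumption
    · rcases min_choice (f a x c) (fstar f c v b) with h | h <;> rw [h]
      exacts [hf a x c, ih c]

theorem fstar_eq_zero_of_notMem_freach {w : List X} {a b : A} (hb : b ∉ freach f a w) :
    fstar f a w b = 0 :=
  le_antisymm (not_lt.1 hb) unitInterval.nonneg'

theorem IsCrisp.fstar_eq_zero_or_eq_one (hcrisp : IsCrisp f) (w : List X) (a b : A) :
    fstar f a w b = 0 ∨ fstar f a w b = 1 :=
  fstar_mem_of_forall_mem {0, 1} (Set.mem_insert _ _) (Set.mem_insert_of_mem _ rfl)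
    hcrisp w a b

theorem IsCrisp.fstar_eq_one_of_mem_freach (hcrisp : IsCrisp f) {w : List X} {a b : A}
    (hb : b ∈ freach f a w) : fstar f a w b = 1 :=
  (hcrisp.fstar_eq_zero_or_eq_one w a b).resolve_left hb.ne'

theorem IsCrisp.fstar_eq_ite_mem_freach (hcrisp : IsCrisp f) (w : List X) (a b : A) :
    fstar f a w b = if b ∈ freach f a w then 1 else 0 := by
  split_ifs with hb
  exacts [hcrisp.fstar_eq_one_of_mem_freach hb, fstar_eq_zero_of_notMem_freach hb]

theorem DD1set_subset_D1set : DD1set f ⊆ D1set f := by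
  rintro w ⟨c, r, hr, h⟩
  refine ⟨c, fun a => Set.eq_singleton_iff_unique_mem.2 ⟨?_, fun b hb => ?_⟩⟩
  · show 0 < fstar f a w c
    rw [(h a).1]
    exact hr
  · by_contra hbc
    exact hb.ne' ((h a).2 b hbc)

theorem DD2set_subset_D2set : DD2set f ⊆ D2set f := by
  intro w h a b
  ext c
  simp only [freach, Set.mem_ofPred_eq, h a b c]

theorem DD3set_subset_D3set : DD3set f ⊆ D3set f := by
  rintro w ⟨c, h⟩
  exact ⟨c, fun a => (h a).1⟩

theorem IsCrisp.D1set_subset_DD1set (hcrisp : IsCrisp f) : D1set f ⊆ DD1set f := by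
  rintro w ⟨c, h⟩
  refine ⟨c, 1, zero_lt_one, fun a => ⟨?_, fun b hbc => ?_⟩⟩
  · exact hcrisp.fstar_eq_one_of_mem_freach ((h a).symm ▸ Set.mem_singleton c)
  · exact fstar_eq_zero_of_notMem_freach ((h a).symm ▸ hbc)

theorem IsCrisp.D2set_subset_DD2set (hcrisp : IsCrisp f) : D2set f ⊆ DD2set f := by
  intro w h a b c
  rw [hcrisp.fstar_eq_ite_mem_freach, hcrisp.fstar_eq_ite_mem_freach, h a b]

theorem IsCrisp.D3set_subset_DD3set (hcrisp : IsCrisp f) : D3set f ⊆ DD3set f := by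
  rintro w ⟨c, h⟩
  refine ⟨c, fun a => ⟨h a, fun b => ?_⟩⟩
  rw [hcrisp.fstar_eq_one_of_mem_freach (h a)]
  exact unitInterval.le_one'

end FuzzyAutomaton

theorem stmt8_general {A X : Type*} [Fintype A] [Nonempty A]
    (f : A → X → A → unitInterval)
    (hcrisp : ∀ (a : A) (x : X) (b : A), f a x b = 0 ∨ f a x b = 1) :
    DD1set f = D1set f ∧ DD2set f = D2set f ∧ DD3set f = D3set f :=
  ⟨DD1set_subset_D1set.antisymm (IsCrisp.D1set_subset_DD1set hcrisp),
    DD2set_subset_D2set.antisymm (IsCrisp.D2set_subset_DD2set hcrisp),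
    DD3set_subset_D3set.antisymm (IsCrisp.D3set_subset_DD3set hcrisp)⟩

/-- For a crisp FFA, `DD_i(F) = D_i(F)` for `i = 1, 2, 3`. -/
theorem stmt8 {A X : Type*} [Fintype X] [Nonempty X] [Fintype A] [Nonempty A]
    (f : A → X → A → unitInterval)
    (hcrisp : ∀ (a : A) (x : X) (b : A), f a x b = 0 ∨ f a x b = 1) :
    DD1set f = D1set f ∧ DD2set f = D2set f ∧ DD3set f = D3set f :=
  stmt8_general f hcrisp
end

section
/- For any fuzzy finite automaton F = (A, f) over an alphabet X, the languages DD_1(F), DD_2(F) and DD_3(F) are regular. -/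
open scoped Classical

/-- Extended transition function of a deterministic finite automaton. -/
def dstar {Q X : Type*} (δ : Q → X → Q) : Q → List X → Q
  | q, [] => q
  | q, x :: w => dstar δ (δ q x) w

/-- A language is regular if it is recognized by a deterministic finite automaton
with an initial state and a set of final states. -/
def IsRegularLang {X : Type*} (L : Set (List X)) : Prop :=
  ∃ (Q : Type) (_ : Fintype Q) (δ : Q → X → Q) (q0 : Q) (F : Set Q),
    L = {w | dstar δ q0 w ∈ F}

/-!
The matrix `fstar f · w ·` of a word `w` is the max-min product of the one-letter matrices
`f · x ·`, so it can be computed letter by letter, and its entries never leave the finite set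
of values taken by `f` together with `0` and `1`, since `max` and `min` return one of their
arguments. Hence the deterministic automaton whose states are these matrices is finite, and any
property of `fstar f · w ·`, in particular each of DD1, DD2, DD3, defines a regular language.
-/

section Regular

variable {Q Q' X : Type*}

lemma dstar_semiconj (δ : Q → X → Q) (δ' : Q' → X → Q') (φ : Q → Q')
    (h : ∀ q x, φ (δ q x) = δ' (φ q) x) (q : Q) (w : List X) :
    φ (dstar δ q w) = dstar δ' (φ q) w := by
  induction w generalizing q with
  | nil => rfl
  | cons x w ih => simp only [dstar, ih, h]

lemma isRegularLang_of_finite {Q : Type*} [Finite Q] (δ : Q → X → Q) (q₀ : Q) (F : Set Q) :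
    IsRegularLang {w | dstar δ q₀ w ∈ F} := by
  let e := Finite.equivFin Q
  refine ⟨_, inferInstance, fun i x => e (δ (e.symm i) x), e q₀, e.symm ⁻¹' F, ?_⟩
  ext w
  have h := dstar_semiconj (fun i x => e (δ (e.symm i) x)) δ e.symm (by simp) (e q₀) w
  simp only [Set.mem_ofPred_eq, Set.mem_preimage, h, Equiv.symm_apply_apply]

lemma isRegularLang_of_mapsTo {Q : Type*} (δ : Q → X → Q) (q₀ : Q) (S : Set Q) (hS : S.Finite)
    (hq₀ : q₀ ∈ S) (hδ : ∀ x, Set.MapsTo (δ · x) S S) (P : Q → Prop) :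
    IsRegularLang {w | P (dstar δ q₀ w)} := by
  have := hS.to_subtype
  let δS : S → X → S := fun q x => ⟨δ q x, hδ x q.2⟩
  have h := dstar_semiconj δS δ Subtype.val (fun _ _ => rfl) ⟨q₀, hq₀⟩
  simpa only [Set.mem_ofPred_eq, h] using isRegularLang_of_finite δS ⟨q₀, hq₀⟩ {q | P q.1}

end Regular

section MaxMin

variable {A α : Type*} [Fintype A] [Nonempty A] [LinearOrder α]

def maxMinComp (M N : A → A → α) (a b : A) : α :=
  Finset.univ.sup' Finset.univ_nonempty fun c => min (M a c) (N c b)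

lemma maxMinComp_assoc (L M N : A → A → α) :
    maxMinComp (maxMinComp L M) N = maxMinComp L (maxMinComp M N) := by
  ext a b
  simp only [maxMinComp, Finset.sup'_inf_distrib_right, Finset.sup'_inf_distrib_left, min_assoc]
  exact Finset.sup'_comm _ _ _

lemma maxMinComp_mem {V : Set α} {M N : A → A → α} (hM : ∀ a c, M a c ∈ V)
    (hN : ∀ c b, N c b ∈ V) (a b : A) : maxMinComp M N a b ∈ V :=
  Finset.sup'_mem V (fun _ hx _ hy => sup_ind _ _ hx hy) _ _ _
    fun c _ => inf_ind _ _ (hM a c) (hN c b)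

lemma sup'_min_ite_eq (g : A → unitInterval) (a : A) :
    (Finset.univ.sup' Finset.univ_nonempty fun c => min (g c) (if c = a then 1 else 0)) = g a := by
  refine le_antisymm (Finset.sup'_le _ _ fun c _ => ?_) (Finset.le_sup'_of_le _
    (Finset.mem_univ a) (by simp [unitInterval.le_one']))
  by_cases h : c = a <;> simp [h]

end MaxMin

section Fuzzy

variable {A X : Type*} [Fintype A] [Nonempty A] (f : A → X → A → unitInterval)

lemma maxMinComp_fstar_nil_left (N : A → A → unitInterval) :
    maxMinComp (fun a b => fstar f a [] b) N = N := by
  funext a b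
  simpa only [maxMinComp, fstar, min_comm] using sup'_min_ite_eq (N · b) a

lemma maxMinComp_fstar_nil_right (M : A → A → unitInterval) :
    maxMinComp M (fun a b => fstar f a [] b) = M := by
  funext a b
  simpa only [maxMinComp, fstar, eq_comm (a := b)] using sup'_min_ite_eq (M a) b

lemma fstar_cons (x : X) (w : List X) :
    (fun a b => fstar f a (x :: w) b) =
      maxMinComp (fun a b => f a x b) (fun a b => fstar f a w b) :=
  rfl

lemma dstar_maxMinComp (M : A → A → unitInterval) (w : List X) :
    dstar (fun M x => maxMinComp M fun a b => f a x b) M w =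
      maxMinComp M fun a b => fstar f a w b := by
  induction w generalizing M with
  | nil => exact (maxMinComp_fstar_nil_right f M).symm
  | cons x w ih => rw [dstar, ih, maxMinComp_assoc, fstar_cons]

lemma isRegularLang_setOf_fstar [Fintype X] (P : (A → A → unitInterval) → Prop) :
    IsRegularLang {w | P fun a b => fstar f a w b} := by
  let V : Set unitInterval := insert 0 (insert 1 (Set.range fun p : A × X × A => f p.1 p.2.1 p.2.2))
  have hV : V.Finite := ((Set.finite_range _).insert 1).insert 0
  have := hV.to_subtype
  have hS : {M : A → A → unitInterval | ∀ a b, M a b ∈ V}.Finite :=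
    (Set.finite_range fun (M : A → A → V) a b => (M a b).1).subset
      fun M hM => ⟨fun a b => ⟨M a b, hM a b⟩, rfl⟩
  have hI : ∀ a b, fstar f a [] b ∈ V := fun a b => by
    by_cases h : b = a <;> simp [fstar, h, V]
  have hf : ∀ x a b, f a x b ∈ V := fun x a b =>
    Set.mem_insert_of_mem _ (Set.mem_insert_of_mem _ ⟨(a, x, b), rfl⟩)
  have := isRegularLang_of_mapsTo _ _ _ hS hI (fun x M hM => maxMinComp_mem hM (hf x)) P
  simpa only [dstar_maxMinComp, maxMinComp_fstar_nil_left] using this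

end Fuzzy

theorem stmt9_general {A X : Type*} [Fintype X] [Fintype A] [Nonempty A]
    (f : A → X → A → unitInterval) :
    IsRegularLang (DD1set f) ∧ IsRegularLang (DD2set f) ∧ IsRegularLang (DD3set f) :=
  ⟨isRegularLang_setOf_fstar f fun M =>
      ∃ (c : A) (r : unitInterval), 0 < r ∧ ∀ a, M a c = r ∧ ∀ b, b ≠ c → M a b = 0,
    isRegularLang_setOf_fstar f fun M => ∀ a b c, M a c = M b c,
    isRegularLang_setOf_fstar f fun M => ∃ c, ∀ a, 0 < M a c ∧ ∀ b, M a b ≤ M a c⟩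

/-- For any FFA `F`, the languages `DD_1(F)`, `DD_2(F)` and `DD_3(F)` are regular. -/
theorem stmt9 {A X : Type*} [Fintype X] [Nonempty X] [Fintype A] [Nonempty A]
    (f : A → X → A → unitInterval) :
    IsRegularLang (DD1set f) ∧ IsRegularLang (DD2set f) ∧ IsRegularLang (DD3set f) :=
  stmt9_general f
end

section
/- Let (A, X, δ) be a deterministic finite automaton and let A^fz = (A, f) be the fuzzy finite automaton over X defined by f(a, x, b) = 1 if δ(a, x) = b and f(a, x, b) = 0 otherwise. Then A^fz is normal; for all a, b ∈ A and w ∈ X*, f*(a, w, b) = 1 if δ*(a, w) = b and f*(a, w, b) = 0 otherwise; and DD_1(A^fz) = DD_2(A^fz) = DD_3(A^fz) = DW, where DW is the set of directing words of the DFA. -/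
open scoped Classical

/-- The crisp FFA associated with a DFA. -/
noncomputable def dfaFuzzy {A X : Type*} (δ : A → X → A) : A → X → A → unitInterval :=
  fun a x b => if δ a x = b then 1 else 0

def directingWords {A X : Type*} (δ : A → X → A) : Set (List X) :=
  {w | ∃ c, ∀ a, dstar δ a w = c}

section DfaFuzzy

variable {A X : Type*} (δ : A → X → A)

theorem dfaFuzzy_apply_self (a : A) (x : X) : dfaFuzzy δ a x (δ a x) = 1 :=
  if_pos rfl

theorem dfaFuzzy_eq_zero {a b : A} {x : X} (h : δ a x ≠ b) : dfaFuzzy δ a x b = 0 :=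
  if_neg h

variable [Fintype A] [Nonempty A]

/-- The maximum defining `f*(a, x :: v, b)` is attained at the unique successor `δ a x`,
every other term being `min 0 _ = 0`. -/
theorem fstar_dfaFuzzy (a : A) (w : List X) (b : A) :
    fstar (dfaFuzzy δ) a w b = if dstar δ a w = b then 1 else 0 := by
  induction w generalizing a with
  | nil => simp only [fstar, dstar, eq_comm]
  | cons x v ih =>
    rw [show dstar δ a (x :: v) = dstar δ (δ a x) v from rfl, ← ih (δ a x)]
    refine le_antisymm (Finset.sup'_le _ _ fun c _ => ?_) ?_
    · by_cases hc : δ a x = c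
      · subst hc
        exact min_le_right _ _
      · rw [dfaFuzzy_eq_zero δ hc]
        exact (min_le_left _ _).trans unitInterval.nonneg'
    · calc fstar (dfaFuzzy δ) (δ a x) v b
          = min (dfaFuzzy δ a x (δ a x)) (fstar (dfaFuzzy δ) (δ a x) v b) := by
            rw [dfaFuzzy_apply_self, min_eq_right unitInterval.le_one']
        _ ≤ _ := Finset.le_sup' (fun c => min (dfaFuzzy δ a x c) (fstar (dfaFuzzy δ) c v b))
            (Finset.mem_univ _)

theorem fstar_dfaFuzzy_of_dstar_eq {a b : A} {w : List X} (h : dstar δ a w = b) :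
    fstar (dfaFuzzy δ) a w b = 1 := by
  rw [fstar_dfaFuzzy, if_pos h]

theorem fstar_dfaFuzzy_of_dstar_ne {a b : A} {w : List X} (h : dstar δ a w ≠ b) :
    fstar (dfaFuzzy δ) a w b = 0 := by
  rw [fstar_dfaFuzzy, if_neg h]

theorem fstar_dfaFuzzy_pos_iff {a b : A} {w : List X} :
    0 < fstar (dfaFuzzy δ) a w b ↔ dstar δ a w = b := by
  by_cases h : dstar δ a w = b
  · simp [fstar_dfaFuzzy_of_dstar_eq δ h, h]
  · simp [fstar_dfaFuzzy_of_dstar_ne δ h, h]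

theorem dd1set_dfaFuzzy : DD1set (dfaFuzzy δ) = directingWords δ := by
  ext w
  constructor
  · rintro ⟨c, r, hr, h⟩
    exact ⟨c, fun a => (fstar_dfaFuzzy_pos_iff δ).1 ((h a).1 ▸ hr)⟩
  · rintro ⟨c, hc⟩
    refine ⟨c, 1, zero_lt_one, fun a => ⟨fstar_dfaFuzzy_of_dstar_eq δ (hc a), fun b hb => ?_⟩⟩
    exact fstar_dfaFuzzy_of_dstar_ne δ (hc a ▸ Ne.symm hb)

theorem dd2set_dfaFuzzy : DD2set (dfaFuzzy δ) = directingWords δ := by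
  ext w
  constructor
  · intro h
    obtain ⟨a₀⟩ := ‹Nonempty A›
    refine ⟨dstar δ a₀ w, fun a => ?_⟩
    have h₁ : fstar (dfaFuzzy δ) a w (dstar δ a₀ w) = 1 :=
      (h a a₀ _).trans (fstar_dfaFuzzy_of_dstar_eq δ rfl)
    rw [← fstar_dfaFuzzy_pos_iff δ, h₁]
    exact zero_lt_one
  · rintro ⟨c, hc⟩ a b d
    rw [fstar_dfaFuzzy, fstar_dfaFuzzy, hc a, hc b]

theorem dd3set_dfaFuzzy : DD3set (dfaFuzzy δ) = directingWords δ := by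
  ext w
  constructor
  · rintro ⟨c, h⟩
    exact ⟨c, fun a => (fstar_dfaFuzzy_pos_iff δ).1 (h a).1⟩
  · rintro ⟨c, hc⟩
    refine ⟨c, fun a => ⟨(fstar_dfaFuzzy_pos_iff δ).2 (hc a), fun b => ?_⟩⟩
    rw [fstar_dfaFuzzy_of_dstar_eq δ (hc a)]
    exact unitInterval.le_one'

end DfaFuzzy

theorem stmt13_general {A X : Type*} [Fintype A] [Nonempty A]
    (δ : A → X → A) :
    (∀ (a : A) (x : X), ∃ b, dfaFuzzy δ a x b = 1) ∧
    (∀ (a : A) (w : List X) (b : A),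
      fstar (dfaFuzzy δ) a w b = if dstar δ a w = b then 1 else 0) ∧
    DD1set (dfaFuzzy δ) = {w : List X | ∃ c, ∀ a, dstar δ a w = c} ∧
    DD2set (dfaFuzzy δ) = {w : List X | ∃ c, ∀ a, dstar δ a w = c} ∧
    DD3set (dfaFuzzy δ) = {w : List X | ∃ c, ∀ a, dstar δ a w = c} :=
  ⟨fun a x => ⟨δ a x, dfaFuzzy_apply_self δ a x⟩, fstar_dfaFuzzy δ,
    dd1set_dfaFuzzy δ, dd2set_dfaFuzzy δ, dd3set_dfaFuzzy δ⟩

/-- For a DFA `(A, X, δ)`, the FFA `A^fz` is normal, its extended transitions are the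
characteristic function of `δ*`, and `DD_1(A^fz) = DD_2(A^fz) = DD_3(A^fz) = DW`,
the set of directing words of the DFA. -/
theorem stmt13 {A X : Type*} [Fintype X] [Nonempty X] [Fintype A] [Nonempty A]
    (δ : A → X → A) :
    (∀ (a : A) (x : X), ∃ b, dfaFuzzy δ a x b = 1) ∧
    (∀ (a : A) (w : List X) (b : A),
      fstar (dfaFuzzy δ) a w b = if dstar δ a w = b then 1 else 0) ∧
    DD1set (dfaFuzzy δ) = {w : List X | ∃ c, ∀ a, dstar δ a w = c} ∧
    DD2set (dfaFuzzy δ) = {w : List X | ∃ c, ∀ a, dstar δ a w = c} ∧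
    DD3set (dfaFuzzy δ) = {w : List X | ∃ c, ∀ a, dstar δ a w = c} :=
  stmt13_general δ
end

section
/- If F = (A, f) is a normal fuzzy finite automaton over an alphabet X, then every DD2-directing word of F is DD3-directing, i.e., DD_2(F) ⊆ DD_3(F). In fact, for every w ∈ DD_2(F) there is a state c ∈ A with f*(a, w, c) = 1 for every a ∈ A. -/
open scoped Classical

theorem exists_fstar_eq_one {A X : Type*} [Fintype A] [Nonempty A]
    {f : A → X → A → unitInterval} (hnormal : ∀ (a : A) (x : X), ∃ b, f a x b = 1) :
    ∀ (w : List X) (a : A), ∃ b, fstar f a w b = 1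
  | [], a => ⟨a, by simp [fstar]⟩
  | x :: v, a => by
    obtain ⟨c, hc⟩ := hnormal a x
    obtain ⟨b, hb⟩ := exists_fstar_eq_one hnormal v c
    refine ⟨b, le_antisymm unitInterval.le_one' ?_⟩
    calc (1 : unitInterval) = min (f a x c) (fstar f c v b) := by rw [hc, hb, min_self]
      _ ≤ fstar f a (x :: v) b :=
        Finset.le_sup' (fun c => min (f a x c) (fstar f c v b)) (Finset.mem_univ c)

theorem IsDD2.exists_forall_fstar_eq_one {A X : Type*} [Fintype A] [Nonempty A]
    {f : A → X → A → unitInterval} (hnormal : ∀ (a : A) (x : X), ∃ b, f a x b = 1)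
    {w : List X} (hw : IsDD2 f w) : ∃ c, ∀ a, fstar f a w c = 1 := by
  obtain ⟨c, hc⟩ := exists_fstar_eq_one hnormal w (Classical.arbitrary A)
  exact ⟨c, fun a => (hw a _ c).trans hc⟩

theorem IsDD3.of_forall_fstar_eq_one {A X : Type*} [Fintype A] [Nonempty A]
    {f : A → X → A → unitInterval} {w : List X} {c : A} (hc : ∀ a, fstar f a w c = 1) :
    IsDD3 f w :=
  ⟨c, fun a => ⟨(hc a).symm ▸ zero_lt_one, fun _ => (hc a).symm ▸ unitInterval.le_one'⟩⟩

theorem stmt14_general {A X : Type*} [Fintype A] [Nonempty A]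
    (f : A → X → A → unitInterval)
    (hnormal : ∀ (a : A) (x : X), ∃ b, f a x b = 1) :
    DD2set f ⊆ DD3set f ∧
    (∀ w ∈ DD2set f, ∃ c, ∀ a, fstar f a w c = 1) :=
  have directs_one : ∀ w ∈ DD2set f, ∃ c, ∀ a, fstar f a w c = 1 :=
    fun _ hw => IsDD2.exists_forall_fstar_eq_one hnormal hw
  ⟨fun w hw => (directs_one w hw).elim fun _ => IsDD3.of_forall_fstar_eq_one, directs_one⟩

/-- For a normal FFA `F`, `DD_2(F) ⊆ DD_3(F)`; in fact every DD2-directing word reaches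
some common state with degree 1 from every state. -/
theorem stmt14 {A X : Type*} [Fintype X] [Nonempty X] [Fintype A] [Nonempty A]
    (f : A → X → A → unitInterval)
    (hnormal : ∀ (a : A) (x : X), ∃ b, f a x b = 1) :
    DD2set f ⊆ DD3set f ∧
    (∀ w ∈ DD2set f, ∃ c, ∀ a, fstar f a w c = 1) :=
  stmt14_general f hnormal
end

section
/- Let G = (B, g) be a subautomaton of a fuzzy finite automaton F = (A, f) over an alphabet X. Then DD_1(F) ⊆ DD_1(G), DD_2(F) ⊆ DD_2(G) and DD_3(F) ⊆ DD_3(G); hence every subautomaton of a DDi-directable FFA is DDi-directable (i = 1, 2, 3). Moreover, if F is normal, then so is G. -/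
open scoped Classical

/-!
A transition from a closed set `B` of states to a state outside `B` has degree `0`, hence, by
induction on the word, so does `f*`. So only states of `B` contribute to the `max` defining `f*`
from a state of `B`, and `f*` of the subautomaton is the restriction of `f*` of `F`. The
directing conditions then restrict to `B`, once one knows that the distinguished state `c` lies
in `B`: it is reached with positive degree from a state of `B`.
-/

section Subautomaton

variable {A X : Type*}

def subautomaton (f : A → X → A → unitInterval) (B : Finset A) :
    ↥B → X → ↥B → unitInterval :=
  fun b x b' => f b x b'

def IsClosedStates (f : A → X → A → unitInterval) (B : Finset A) : Prop :=
  ∀ b ∈ B, ∀ (x : X) (c : A), 0 < f b x c → c ∈ B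

variable {f : A → X → A → unitInterval} {B : Finset A}

theorem IsClosedStates.apply_eq_zero (hB : IsClosedStates f B) {b c : A} (hb : b ∈ B)
    (hc : c ∉ B) (x : X) : f b x c = 0 :=
  le_antisymm (not_lt.1 fun h => hc (hB b hb x c h)) unitInterval.nonneg'

theorem IsClosedStates.normal_subautomaton (hB : IsClosedStates f B)
    (hf : ∀ (a : A) (x : X), ∃ c, f a x c = 1) (b : ↥B) (x : X) :
    ∃ c : ↥B, subautomaton f B b x c = 1 := by
  obtain ⟨c, hc⟩ := hf b x
  exact ⟨⟨c, hB b b.2 x c (hc ▸ zero_lt_one)⟩, hc⟩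

variable [Fintype A] [Nonempty A]

theorem IsClosedStates.fstar_eq_zero (hB : IsClosedStates f B) (w : List X) {b c : A}
    (hb : b ∈ B) (hc : c ∉ B) : fstar f b w c = 0 := by
  induction w generalizing b with
  | nil => simp [fstar, show c ≠ b by rintro rfl; exact hc hb]
  | cons x v ih =>
    refine le_antisymm (Finset.sup'_le _ _ fun a _ => ?_) unitInterval.nonneg'
    by_cases ha : a ∈ B
    · exact (min_le_right _ _).trans (ih ha).le
    · exact (min_le_left _ _).trans (hB.apply_eq_zero hb ha x).le

theorem IsClosedStates.mem_of_fstar_pos (hB : IsClosedStates f B) {w : List X} {b c : A}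
    (hb : b ∈ B) (hpos : 0 < fstar f b w c) : c ∈ B := by
  by_contra hc
  exact hpos.ne' (hB.fstar_eq_zero w hb hc)

variable [Nonempty B]

theorem IsClosedStates.fstar_subautomaton (hB : IsClosedStates f B) (w : List X) (b c : ↥B) :
    fstar (subautomaton f B) b w c = fstar f b w c := by
  induction w generalizing b with
  | nil =>
    rcases eq_or_ne c b with rfl | hcb
    · simp [fstar]
    · simp [fstar, hcb, Subtype.coe_ne_coe.mpr hcb]
  | cons x v ih =>
    refine le_antisymm (Finset.sup'_le _ _ fun a _ => ?_) (Finset.sup'_le _ _ fun a _ => ?_)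
    · exact Finset.le_sup'_of_le _ (Finset.mem_univ (a : A)) (by rw [ih a]; rfl)
    · by_cases ha : a ∈ B
      · exact Finset.le_sup'_of_le _ (Finset.mem_univ ⟨a, ha⟩) (by rw [ih ⟨a, ha⟩]; rfl)
      · rw [hB.apply_eq_zero b.2 ha x, min_eq_left unitInterval.nonneg']
        exact Finset.le_sup'_of_le _ (Finset.mem_univ b) unitInterval.nonneg'

theorem IsClosedStates.isDD1_subautomaton (hB : IsClosedStates f B) {w : List X}
    (hw : IsDD1 f w) : IsDD1 (subautomaton f B) w := by
  obtain ⟨c, r, hr, hc⟩ := hw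
  obtain ⟨b⟩ := ‹Nonempty B›
  have hcB : c ∈ B := hB.mem_of_fstar_pos b.2 ((hc b).1 ▸ hr)
  refine ⟨⟨c, hcB⟩, r, hr, fun a => ⟨?_, fun d hd => ?_⟩⟩
  · rw [hB.fstar_subautomaton]
    exact (hc a).1
  · rw [hB.fstar_subautomaton]
    exact (hc a).2 d fun h => hd (Subtype.ext h)

theorem IsClosedStates.isDD2_subautomaton (hB : IsClosedStates f B) {w : List X}
    (hw : IsDD2 f w) : IsDD2 (subautomaton f B) w := by
  intro a b c
  rw [hB.fstar_subautomaton, hB.fstar_subautomaton]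
  exact hw a b c

theorem IsClosedStates.isDD3_subautomaton (hB : IsClosedStates f B) {w : List X}
    (hw : IsDD3 f w) : IsDD3 (subautomaton f B) w := by
  obtain ⟨c, hc⟩ := hw
  obtain ⟨b⟩ := ‹Nonempty B›
  have hcB : c ∈ B := hB.mem_of_fstar_pos b.2 (hc b).1
  refine ⟨⟨c, hcB⟩, fun a => ⟨?_, fun d => ?_⟩⟩
  · rw [hB.fstar_subautomaton]
    exact (hc a).1
  · rw [hB.fstar_subautomaton, hB.fstar_subautomaton]
    exact (hc a).2 d

end Subautomaton

theorem stmt16_general {A X : Type*} [Fintype A] [Nonempty A]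
    (f : A → X → A → unitInterval) (B : Finset A) (hB : B.Nonempty)
    (hclosed : ∀ b ∈ B, ∀ (x : X) (c : A), 0 < f b x c → c ∈ B) :
    haveI : Nonempty ↥B := ⟨⟨hB.choose, hB.choose_spec⟩⟩
    ((∀ w : List X, IsDD1 f w → IsDD1 (fun (b : ↥B) (x : X) (b' : ↥B) => f ↑b x ↑b') w) ∧
     (∀ w : List X, IsDD2 f w → IsDD2 (fun (b : ↥B) (x : X) (b' : ↥B) => f ↑b x ↑b') w) ∧
     (∀ w : List X, IsDD3 f w → IsDD3 (fun (b : ↥B) (x : X) (b' : ↥B) => f ↑b x ↑b') w) ∧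
     ((∀ (a : A) (x : X), ∃ c, f a x c = 1) →
       ∀ (b : ↥B) (x : X), ∃ c : ↥B, f ↑b x ↑c = 1)) := by
  have hB' : IsClosedStates f B := hclosed
  have : Nonempty ↥B := ⟨⟨hB.choose, hB.choose_spec⟩⟩
  exact ⟨fun _ => hB'.isDD1_subautomaton, fun _ => hB'.isDD2_subautomaton,
    fun _ => hB'.isDD3_subautomaton, hB'.normal_subautomaton⟩

/-- If `G` is the subautomaton of an FFA `F` determined by a nonempty closed subset `B`
of states, then `DD_i(F) ⊆ DD_i(G)` for `i = 1, 2, 3` (hence every subautomaton of a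
DDi-directable FFA is DDi-directable), and if `F` is normal then so is `G`. -/
theorem stmt16 {A X : Type*} [Fintype X] [Nonempty X] [Fintype A] [Nonempty A]
    (f : A → X → A → unitInterval) (B : Finset A) (hB : B.Nonempty)
    (hclosed : ∀ b ∈ B, ∀ (x : X) (c : A), 0 < f b x c → c ∈ B) :
    haveI : Nonempty ↥B := ⟨⟨hB.choose, hB.choose_spec⟩⟩
    ((∀ w : List X, IsDD1 f w → IsDD1 (fun (b : ↥B) (x : X) (b' : ↥B) => f ↑b x ↑b') w) ∧
     (∀ w : List X, IsDD2 f w → IsDD2 (fun (b : ↥B) (x : X) (b' : ↥B) => f ↑b x ↑b') w) ∧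
     (∀ w : List X, IsDD3 f w → IsDD3 (fun (b : ↥B) (x : X) (b' : ↥B) => f ↑b x ↑b') w) ∧
     ((∀ (a : A) (x : X), ∃ c, f a x c = 1) →
       ∀ (b : ↥B) (x : X), ∃ c : ↥B, f ↑b x ↑c = 1)) :=
  stmt16_general f B hB hclosed
end

section
/- Let φ : F → G be an epimorphism of fuzzy finite automata F = (A, f) and G = (B, g) over an alphabet X. Then for all a ∈ A, b ∈ B and w ∈ X*: g*(φ(a), w, b) = max{f*(a, w, a') : a' ∈ A, φ(a') = b}, and the image of F(a, w) under φ equals G(φ(a), w). -/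
open scoped Classical

/-!
Induction on the word, peeling off its first letter. Along `φ`, every path of `F` maps to a path
of `G` of at least the same degree; conversely a maximising intermediate state of `G` lifts, by
the epimorphism condition and then the induction hypothesis, to a path of `F` of the same degree.
Reachable sets are supports, and a maximum over a fibre is positive iff one of its terms is.
-/

section Epimorphism

variable {A B X : Type*} [Fintype A] [Nonempty A] [Fintype B] [Nonempty B]
  {f : A → X → A → unitInterval} {g : B → X → B → unitInterval} {phi : A → B}

theorem fstar_nil_le_fstar_nil (a a' : A) :
    fstar f a [] a' ≤ fstar g (phi a) [] (phi a') := by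
  by_cases h : a' = a
  · simp [fstar, h]
  · simp only [fstar, if_neg h]
    exact (fstar g (phi a) [] (phi a')).2.1

theorem isGreatest_fstar_nil (hsurj : Function.Surjective phi) (a : A) (b : B) :
    IsGreatest (fstar f a [] '' (phi ⁻¹' {b})) (fstar g (phi a) [] b) := by
  refine ⟨?_, Set.forall_mem_image.2 fun a' (ha' : phi a' = b) => ha' ▸ fstar_nil_le_fstar_nil a a'⟩
  by_cases hb : b = phi a
  · exact ⟨a, hb.symm, by simp [fstar, hb]⟩
  · obtain ⟨a', rfl⟩ := hsurj b
    have ha' : a' ≠ a := fun h => hb (h ▸ rfl)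
    exact ⟨a', rfl, by simp [fstar, ha', hb]⟩

theorem isGreatest_fstar (hsurj : Function.Surjective phi)
    (hhom : ∀ a x b, IsGreatest (f a x '' (phi ⁻¹' {b})) (g (phi a) x b)) :
    ∀ (w : List X) (a : A) (b : B),
      IsGreatest (fstar f a w '' (phi ⁻¹' {b})) (fstar g (phi a) w b) := by
  intro w
  induction w with
  | nil => exact isGreatest_fstar_nil hsurj
  | cons x v ih =>
    intro a b
    have upper : ∀ a' ∈ phi ⁻¹' {b}, fstar f a (x :: v) a' ≤ fstar g (phi a) (x :: v) b := by
      intro a' ha'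
      refine Finset.sup'_le _ _ fun c _ => ?_
      calc min (f a x c) (fstar f c v a')
          ≤ min (g (phi a) x (phi c)) (fstar g (phi c) v b) :=
            min_le_min ((hhom a x (phi c)).2 ⟨c, rfl, rfl⟩) ((ih c b).2 ⟨a', ha', rfl⟩)
        _ ≤ fstar g (phi a) (x :: v) b :=
            Finset.le_sup' (fun d => min (g (phi a) x d) (fstar g d v b)) (Finset.mem_univ _)
    refine ⟨?_, Set.forall_mem_image.2 upper⟩
    -- the maximum over intermediate states `d` of `G` is attained at some `d`; lift it to `F`
    obtain ⟨d, -, hd⟩ := Finset.exists_mem_eq_sup' Finset.univ_nonempty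
      fun d => min (g (phi a) x d) (fstar g d v b)
    obtain ⟨c, rfl, hc⟩ := (hhom a x d).1
    obtain ⟨a', ha', ha'c⟩ := (ih c b).1
    refine ⟨a', ha', le_antisymm (upper a' ha') ?_⟩
    calc fstar g (phi a) (x :: v) b = min (f a x c) (fstar f c v a') := by
          rw [fstar, hd, hc, ha'c]
      _ ≤ fstar f a (x :: v) a' :=
          Finset.le_sup' (fun c => min (f a x c) (fstar f c v a')) (Finset.mem_univ c)

theorem image_freach_of_isGreatest {a : A} {w : List X}
    (h : ∀ b, IsGreatest (fstar f a w '' (phi ⁻¹' {b})) (fstar g (phi a) w b)) :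
    phi '' freach f a w = freach g (phi a) w := by
  ext b
  change b ∈ phi '' freach f a w ↔ 0 < fstar g (phi a) w b
  rw [lt_isLUB_iff (h b).isLUB, Set.exists_mem_image]
  exact ⟨fun ⟨a', h0, h1⟩ => ⟨a', h1, h0⟩, fun ⟨a', h1, h0⟩ => ⟨a', h0, h1⟩⟩

end Epimorphism

theorem stmt17_general {A B X : Type*} [Fintype A] [Nonempty A]
    [Fintype B] [Nonempty B]
    (f : A → X → A → unitInterval) (g : B → X → B → unitInterval)
    (phi : A → B) (hsurj : Function.Surjective phi)
    (hhom : ∀ (a : A) (x : X) (b : B),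
      (∃ a', phi a' = b ∧ g (phi a) x b = f a x a') ∧
      (∀ a', phi a' = b → f a x a' ≤ g (phi a) x b)) :
    (∀ (a : A) (w : List X) (b : B),
      (∃ a', phi a' = b ∧ fstar g (phi a) w b = fstar f a w a') ∧
      (∀ a', phi a' = b → fstar f a w a' ≤ fstar g (phi a) w b)) ∧
    (∀ (a : A) (w : List X), phi '' freach f a w = freach g (phi a) w) := by
  have hletter : ∀ a x b, IsGreatest (f a x '' (phi ⁻¹' {b})) (g (phi a) x b) := fun a x b =>
    let ⟨⟨a', ha', he⟩, hle⟩ := hhom a x b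
    ⟨⟨a', ha', he.symm⟩, Set.forall_mem_image.2 hle⟩
  have hword := isGreatest_fstar hsurj hletter
  refine ⟨fun a w b => ?_, fun a w => image_freach_of_isGreatest (hword w a)⟩
  obtain ⟨⟨a', ha', he⟩, hle⟩ := hword w a b
  exact ⟨⟨a', ha', he.symm⟩, Set.forall_mem_image.1 hle⟩

/-- If `φ : F → G` is an epimorphism of FFAs, then for all `a ∈ A`, `b ∈ B`, `w ∈ X*`,
`g*(φ(a), w, b) = max{f*(a, w, a') : φ(a') = b}`, and `φ(F(a, w)) = G(φ(a), w)`. -/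
theorem stmt17 {A B X : Type*} [Fintype X] [Nonempty X] [Fintype A] [Nonempty A]
    [Fintype B] [Nonempty B]
    (f : A → X → A → unitInterval) (g : B → X → B → unitInterval)
    (phi : A → B) (hsurj : Function.Surjective phi)
    (hhom : ∀ (a : A) (x : X) (b : B),
      (∃ a', phi a' = b ∧ g (phi a) x b = f a x a') ∧
      (∀ a', phi a' = b → f a x a' ≤ g (phi a) x b)) :
    (∀ (a : A) (w : List X) (b : B),
      (∃ a', phi a' = b ∧ fstar g (phi a) w b = fstar f a w a') ∧
      (∀ a', phi a' = b → fstar f a w a' ≤ fstar g (phi a) w b)) ∧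
    (∀ (a : A) (w : List X), phi '' freach f a w = freach g (phi a) w) :=
  stmt17_general f g phi hsurj hhom
end
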